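/- arXiv:2205.09168 — 2 statements merged into one kernel-verified Lean document; each statement's English description precedes it below -/
import Mathlib

section
/- Let ν be a lattice path from (0,0) to (a,b) whose path ν̄ = EνN has w valleys. For 1 ≤ i < j ≤ w, the polytopes Q_i and Q_j have disjoint relative interiors. More precisely, writing x_{(u,v)} for the coordinate of a flow at the edge (u,v): if j < w, then Q_i and Q_j lie in the two opposite closed half-spaces determined by the hyperplane { x : x_{(v_i,v_{i+1})} = x_{(v_j,v_{j+1})} }; and Q_i and Q_w lie in the two opposite closed half-spaces determined by the hyperplane { x : x_{(v_i,v_{i+1})} = 0 }. -/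
namespace FP

/-- The three possible types of an edge `(i,j)` with `i < j`. -/
inductive EdgeType : Type
  | forward
  | backward
  | bidirectional
  deriving DecidableEq

/-- An edge is a pair of endpoints `(i,j)` (with the convention `i < j`
for well-formed graphs) together with its type. -/
abbrev GEdge : Type := ℕ × ℕ × EdgeType

/-- A directed multigraph given by a list of edges, together with a
distinguished source and sink vertex. -/
structure LGraph : Type where
  edges : List GEdge
  src : ℕ
  snk : ℕ

namespace LGraph

/-- The number of edges. -/
def m (G : LGraph) : ℕ := G.edges.length

/-- The smaller endpoint of the `e`-th edge. -/
def tail (G : LGraph) (e : Fin G.m) : ℕ := (G.edges.get e).1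

/-- The larger endpoint of the `e`-th edge. -/
def head (G : LGraph) (e : Fin G.m) : ℕ := (G.edges.get e).2.1

/-- The type of the `e`-th edge. -/
def etype (G : LGraph) (e : Fin G.m) : EdgeType := (G.edges.get e).2.2

/-- Wellformedness: the graph has vertex set `{1,…,n}` and each edge `(i,j)`
satisfies `i < j`. -/
def WF (G : LGraph) (n : ℕ) : Prop := ∀ e ∈ G.edges, 1 ≤ e.1 ∧ e.1 < e.2.1 ∧ e.2.1 ≤ n

/-- The netflow of `x` at the vertex `v`: total flow on edges `(v,k)`, `v < k`,
minus the total flow on edges `(i,v)`, `i < v`. -/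
noncomputable def netflow (G : LGraph) (x : Fin G.m → ℝ) (v : ℕ) : ℝ :=
  ∑ e : Fin G.m, ((if G.tail e = v then x e else 0) - (if G.head e = v then x e else 0))

/-- The set of `u`-flows on `G`, where `u = e_src - e_snk`: the netflow is `1` at the
source, `-1` at the sink and `0` elsewhere, flows on forward edges are nonnegative and
flows on backward edges are nonpositive (bidirectional edges unrestricted).  This is
the flow polytope `F_G ⊆ ℝ^m`. -/
def flowSet (G : LGraph) : Set (Fin G.m → ℝ) :=
  { x | (∀ v : ℕ, G.netflow x v = (if v = G.src then (1 : ℝ) else 0) - (if v = G.snk then 1 else 0))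
      ∧ ∀ e : Fin G.m, (G.etype e = .forward → 0 ≤ x e) ∧ (G.etype e = .backward → x e ≤ 0) }

/-- One step of a directed walk: forward edges can be traversed from the smaller to the
larger endpoint, backward edges from the larger to the smaller, bidirectional edges both
ways. -/
def DStep (G : LGraph) (a b : ℕ) : Prop :=
  ∃ e : Fin G.m, (G.tail e = a ∧ G.head e = b ∧ G.etype e ≠ .backward) ∨
                 (G.head e = a ∧ G.tail e = b ∧ G.etype e ≠ .forward)

/-- `G` is acyclic if it has no directed cycle. -/
def Acyclic (G : LGraph) : Prop := ∀ v : ℕ, ¬ Relation.TransGen G.DStep v v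

/-- One step in the underlying undirected graph. -/
def UStep (G : LGraph) (a b : ℕ) : Prop :=
  ∃ e : Fin G.m, (G.tail e = a ∧ G.head e = b) ∨ (G.head e = a ∧ G.tail e = b)

/-- `G` is connected (as an undirected graph on the vertex set `{1,…,n}`). -/
def Connected (G : LGraph) (n : ℕ) : Prop :=
  ∀ a b : ℕ, 1 ≤ a → a ≤ n → 1 ≤ b → b ≤ n → Relation.ReflTransGen G.UStep a b

/-- The starting vertex of a traversal step `(e, d)`: `d = true` means the edge `e` is
traversed from its smaller to its larger endpoint. -/
def sv (G : LGraph) (s : Fin G.m × Bool) : ℕ := if s.2 then G.tail s.1 else G.head s.1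

/-- The ending vertex of a traversal step. -/
def ev (G : LGraph) (s : Fin G.m × Bool) : ℕ := if s.2 then G.head s.1 else G.tail s.1

/-- A route of `G`: a directed path from the source to the sink (not repeating edges),
traversing each edge in a direction allowed by its type. -/
structure Route (G : LGraph) : Type where
  steps : List (Fin G.m × Bool)
  ne : steps ≠ []
  chain : steps.Chain' (fun s t => G.ev s = G.sv t)
  first : G.sv (steps.head ne) = G.src
  last : G.ev (steps.getLast ne) = G.snk
  dir : ∀ s ∈ steps, (s.2 = true → G.etype s.1 ≠ .backward) ∧ (s.2 = false → G.etype s.1 ≠ .forward)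
  nodup : (steps.map Prod.fst).Nodup

/-- The signed characteristic vector of a route: `+1` on edges traversed from smaller to
larger endpoint, `-1` on edges traversed from larger to smaller endpoint, `0` on unused
edges. -/
noncomputable def Route.vec {G : LGraph} (R : Route G) : Fin G.m → ℝ := fun e =>
  if (e, true) ∈ R.steps then 1 else if (e, false) ∈ R.steps then -1 else 0

end LGraph

/-- A point of `ℝ^α` is a lattice point if all its coordinates are integers. -/
def IsLatticePt {α : Type*} (x : α → ℝ) : Prop := ∀ i, ∃ z : ℤ, x i = (z : ℝ)

/-- Integral equivalence of two subsets `P ⊆ ℝ^α`, `Q ⊆ ℝ^β`: an affine map `φ` restricting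
to a bijection from `P` onto `Q` and to a bijection between the lattice points of the
affine hull of `P` and those of the affine hull of `Q`. -/
def IntEquiv {α β : Type*} (P : Set (α → ℝ)) (Q : Set (β → ℝ)) : Prop :=
  ∃ φ : (α → ℝ) →ᵃ[ℝ] (β → ℝ),
    Set.BijOn φ P Q ∧
    Set.BijOn φ ({x | IsLatticePt x} ∩ (affineSpan ℝ P : Set (α → ℝ)))
                ({x | IsLatticePt x} ∩ (affineSpan ℝ Q : Set (β → ℝ)))

/-! ### Lattice paths and the canonical indexing -/

/-- A lattice path is a list of letters, `true` = E-step `(1,0)`, `false` = N-step `(0,1)`.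
`ovl ν` is the path `ν̄ = E ν N`. -/
def ovl (ν : List Bool) : List Bool := true :: ν ++ [false]

/-- Auxiliary function for the canonical indexing: `prev` is the previous letter,
`k` is the last index used. -/
def canonIdxAux : List Bool → Bool → ℕ → List ℕ
  | [], _, _ => []
  | c :: rest, prev, k =>
    if prev && !c then k :: canonIdxAux rest c k
    else (k + 1) :: canonIdxAux rest c (k + 1)

/-- The canonical indexing of a word in `{E,N}`: reading left to right, each letter
receives the next positive integer, except that the first `N` of a maximal run of `N`s
receives the index of the immediately preceding `E` step. -/
def canonIdx (w : List Bool) : List ℕ := canonIdxAux w false 0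

/-- The letter at position `p` (`true` = E). -/
def letterAt (w : List Bool) (p : ℕ) : Bool := w.getD p false

/-- The canonical index of the letter at position `p`. -/
def idxAt (w : List Bool) (p : ℕ) : ℕ := (canonIdx w).getD p 0

/-- The largest canonical index `n` of the word `w`. -/
def nIdx (w : List Bool) : ℕ := idxAt w (w.length - 1)

/-- The set `I` of indices of E steps. -/
def Iset (w : List Bool) : Finset ℕ :=
  (((List.range w.length).filter (fun p => letterAt w p)).map (idxAt w)).toFinset

/-- The set `J` of indices of N steps. -/
def Jset (w : List Bool) : Finset ℕ :=
  (((List.range w.length).filter (fun p => !letterAt w p)).map (idxAt w)).toFinset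

/-- The set `I ∩ J` of indices of valleys. -/
def Vset (w : List Bool) : Finset ℕ := Iset w ∩ Jset w

/-- The valleys `v_1 < v_2 < ⋯ < v_w` as a sorted list. -/
def valleyList (w : List Bool) : List ℕ := (Vset w).sort (· ≤ ·)

/-- The number `w` of valleys. -/
def numVal (w : List Bool) : ℕ := (valleyList w).length

/-- The `k`-th valley `v_k` (`1 ≤ k ≤ numVal w`). -/
def vv (w : List Bool) (k : ℕ) : ℕ := (valleyList w).getD (k - 1) 0

/-! ### The ν-graph, its bidirectional version and partial augmentations -/

/-- `(i,j)` is an edge of the ν-graph iff `E_i ⋯ N_j` is a consecutive subword of `w`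
whose only valleys are `E_k N_k` with `k = i` or `k = j`. -/
def isNuEdgeB (w : List Bool) (i j : ℕ) : Bool :=
  (List.range w.length).any fun p =>
    (List.range w.length).any fun q =>
      decide (p < q) && letterAt w p && !letterAt w q &&
      decide (idxAt w p = i) && decide (idxAt w q = j) &&
      ((List.range w.length).all fun r =>
        !(decide (p ≤ r) && decide (r + 1 ≤ q) && letterAt w r && !letterAt w (r + 1)) ||
        decide (idxAt w r = i) || decide (idxAt w r = j))

/-- The list of edges `(i,j)`, `i < j`, of the ν-graph `G(ν)` (where `w = ν̄`). -/
def nuEdgePairs (w : List Bool) : List (ℕ × ℕ) :=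
  ((List.range (nIdx w + 1)).flatMap fun i =>
    (List.range (nIdx w + 1)).map fun j => (i, j)).filter
    fun p => decide (p.1 < p.2) && isNuEdgeB w p.1 p.2

/-- The edges of `G(ν)`, all forward. -/
def Gedges (w : List Bool) : List GEdge :=
  (nuEdgePairs w).map fun p => (p.1, p.2, EdgeType.forward)

/-- The edges of the bidirectional ν-graph `G_B(ν)`: an edge is bidirectional exactly
when both of its endpoints lie in `I ∩ J`. -/
def GBedges (w : List Bool) : List GEdge :=
  (nuEdgePairs w).map fun p =>
    (p.1, p.2, if p.1 ∈ Vset w ∧ p.2 ∈ Vset w then EdgeType.bidirectional else EdgeType.forward)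

/-- Out-degree of a vertex in an edge list: the number of edges traversable out of `v`. -/
def outDegL (E : List GEdge) (v : ℕ) : ℕ :=
  (E.filter fun e => (decide (e.1 = v) && decide (e.2.2 ≠ EdgeType.backward)) ||
                     (decide (e.2.1 = v) && decide (e.2.2 ≠ EdgeType.forward))).length

/-- In-degree of a vertex in an edge list: the number of edges traversable into `v`. -/
def inDegL (E : List GEdge) (v : ℕ) : ℕ :=
  (E.filter fun e => (decide (e.2.1 = v) && decide (e.2.2 ≠ EdgeType.backward)) ||
                     (decide (e.1 = v) && decide (e.2.2 ≠ EdgeType.forward))).length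

/-- The full augmentation of an edge list on inner vertices `1,…,n`: add a source `s = 0`
and a sink `t = n+1` together with forward edges `(s,i)` and `(i,t)` for all `i`. -/
def fullAug (n : ℕ) (E : List GEdge) : List GEdge :=
  E ++ ((List.range n).map fun i => (0, i + 1, EdgeType.forward))
    ++ ((List.range n).map fun i => (i + 1, n + 1, EdgeType.forward))

/-- The partial augmentation: the full augmentation with the edges `(s,i)` for which `i`
has out-degree one, and the edges `(j,t)` for which `j` has in-degree one, removed. -/
def partAug (n : ℕ) (E : List GEdge) : List GEdge :=
  E ++ ((List.range n).filterMap fun i =>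
          if outDegL (fullAug n E) (i + 1) = 1 then none else some (0, i + 1, EdgeType.forward))
    ++ ((List.range n).filterMap fun j =>
          if inDegL (fullAug n E) (j + 1) = 1 then none else some (j + 1, n + 1, EdgeType.forward))

/-- The graph `G̃_B(ν)`: the partial augmentation of the bidirectional ν-graph, with
source `s = 0` and sink `t = n+1`. -/
def GBt (w : List Bool) : LGraph := ⟨partAug (nIdx w) (GBedges w), 0, nIdx w + 1⟩

/-- The graph `G̃(ν)`: the partial augmentation of the ν-graph. -/
def Gt (w : List Bool) : LGraph := ⟨partAug (nIdx w) (Gedges w), 0, nIdx w + 1⟩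

/-- The edges of the graph `G(ν,k)`: the bidirectional path of `G_B(ν)` is replaced by
`C_ν(k)`, i.e. all edges are made forward, the forward edge `(v_k, v_{k+1})` is removed
and the backward edge `(v_1, v_w)` is added when `k < w` (for `k = w` nothing changes). -/
def GnuIedges (w : List Bool) (k : ℕ) : List GEdge :=
  ((nuEdgePairs w).filterMap fun p =>
    if k < numVal w ∧ p = (vv w k, vv w (k + 1)) then none
    else some (p.1, p.2, EdgeType.forward))
  ++ (if k < numVal w then [(vv w 1, vv w (numVal w), EdgeType.backward)] else [])

/-- The graph `G̃(ν,k)`: the partial augmentation of `G(ν,k)`. -/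
def Gnut (w : List Bool) (k : ℕ) : LGraph := ⟨partAug (nIdx w) (GnuIedges w k), 0, nIdx w + 1⟩

/-- All candidate edges on the vertex set `{0,1,…,n+1}`. -/
def allCand (n : ℕ) : List GEdge :=
  (List.range (n + 2)).flatMap fun a =>
    (List.range (n + 2)).flatMap fun b =>
      [(a, b, EdgeType.forward), (a, b, EdgeType.backward), (a, b, EdgeType.bidirectional)]

/-- The intersection `∩_{k ∈ S} G̃(ν,k)` of the partial augmentations of the graphs
`G(ν,k)`, `k ∈ S`, as a graph with source `0` and sink `n+1`. -/
def interGraph (w : List Bool) (S : Finset ℕ) : LGraph :=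
  ⟨(allCand (nIdx w)).filter fun e =>
      decide (∀ k ∈ S, e ∈ partAug (nIdx w) (GnuIedges w k)), 0, nIdx w + 1⟩

/-! ### The polytopes `Q_i` -/

/-- The condition on a route of `G̃_B(ν)` defining `Q_k` (`1 ≤ k < w`): the route does not
traverse the bidirectional edge `(v_k, v_{k+1})` forward, and traverses it backward
whenever it traverses any bidirectional edge backward. -/
def QRoute (w : List Bool) (k : ℕ) (R : LGraph.Route (GBt w)) : Prop :=
  (∀ e : Fin (GBt w).m, (GBt w).tail e = vv w k → (GBt w).head e = vv w (k + 1) →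
      (e, true) ∉ R.steps) ∧
  ((∃ s ∈ R.steps, s.2 = false) →
      ∃ e : Fin (GBt w).m, (GBt w).tail e = vv w k ∧ (GBt w).head e = vv w (k + 1) ∧
        (e, false) ∈ R.steps)

/-- The polytope `Q_k` for `1 ≤ k ≤ w`.  For `k < w` it is the convex hull of the signed
characteristic vectors of the routes satisfying `QRoute`, and `Q_w` is the flow polytope
`F_{G̃(ν)}` viewed inside `F_{G̃_B(ν)}` (the nonnegative flows). -/
def Qset (w : List Bool) (k : ℕ) : Set (Fin (GBt w).m → ℝ) :=
  if k = numVal w then { x ∈ (GBt w).flowSet | ∀ e, 0 ≤ x e }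
  else convexHull ℝ { x | ∃ R : LGraph.Route (GBt w), QRoute w k R ∧ x = R.vec }

/-! ### Products of simplices -/

/-- The `i`-th standard basis vector. -/
def stdBasisVec {α : Type*} [DecidableEq α] (i : α) : α → ℝ := fun k => if k = i then 1 else 0

/-- The product of simplices `Δ_a × Δ_b = conv{(e_i, e_j)} ⊆ ℝ^{a+1} × ℝ^{b+1}`. -/
def prodSimplices (a b : ℕ) : Set ((Fin (a + 1) ⊕ Fin (b + 1)) → ℝ) :=
  convexHull ℝ { x | ∃ (i : Fin (a + 1)) (j : Fin (b + 1)),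
    x = Sum.elim (stdBasisVec i) (stdBasisVec j) }

/-! ### Arcs and (I,J)-trees -/

/-- An arc on `w`: a pair `(i,j)` with `i ∈ I` and `j ∈ J`. -/
def IsArc (w : List Bool) (p : ℕ × ℕ) : Prop := p.1 ∈ Iset w ∧ p.2 ∈ Jset w

/-- The six configurations in which the arcs `(i,j) = p` and `(i',j') = q` cyclically
cross. -/
def CycCrossRaw (p q : ℕ × ℕ) : Prop :=
  (p.1 < q.1 ∧ q.1 < p.2 ∧ p.2 < q.2) ∨   -- i < i' < j < j'
  (q.2 < p.1 ∧ p.1 < q.1 ∧ q.1 < p.2) ∨   -- j' < i < i' < j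
  (p.2 < q.2 ∧ q.2 < p.1 ∧ p.1 < q.1) ∨   -- j < j' < i < i'
  (q.1 < p.2 ∧ p.2 < q.2 ∧ q.2 < p.1) ∨   -- i' < j < j' < i
  (p.1 < q.2 ∧ q.2 < q.1 ∧ q.1 < p.2) ∨   -- i < j' < i' < j
  (p.2 < p.1 ∧ p.1 < q.2 ∧ q.2 < q.1)     -- j < i < j' < i'

/-- Two arcs cyclically cross (up to swapping the roles of the two arcs). -/
def CycCross (p q : ℕ × ℕ) : Prop := CycCrossRaw p q ∨ CycCrossRaw q p

/-- A cyclic (I,J)-forest: a set of pairwise cyclically non-crossing arcs. -/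
def CycForest (w : List Bool) (F : Set (ℕ × ℕ)) : Prop :=
  (∀ p ∈ F, IsArc w p) ∧ ∀ p ∈ F, ∀ q ∈ F, p ≠ q → ¬ CycCross p q

/-- A cyclic (I,J)-tree: a maximal cyclic (I,J)-forest. -/
def CycTree (w : List Bool) (T : Set (ℕ × ℕ)) : Prop :=
  CycForest w T ∧ ∀ T', CycForest w T' → T ⊆ T' → T' = T

/-- An increasing (I,J)-forest: a cyclic (I,J)-forest all of whose arcs are increasing
or minimal. -/
def IncForest (w : List Bool) (F : Set (ℕ × ℕ)) : Prop :=
  CycForest w F ∧ ∀ p ∈ F, p.1 ≤ p.2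

/-- An increasing (I,J)-tree: a maximal increasing (I,J)-forest. -/
def IncTree (w : List Bool) (T : Set (ℕ × ℕ)) : Prop :=
  IncForest w T ∧ ∀ T', IncForest w T' → T ⊆ T' → T' = T

/-- Two edges `(a,b)` and `(c,d)` with `a < b`, `c < d` cross if `a < c < b < d` or
`c < a < d < b`. -/
def CrossE (p q : ℕ × ℕ) : Prop :=
  (p.1 < q.1 ∧ q.1 < p.2 ∧ p.2 < q.2) ∨ (q.1 < p.1 ∧ p.1 < q.2 ∧ q.2 < p.2)

/-- A graph on `I ∪ J` whose edges `(i,j)` satisfy `i ∈ I`, `j ∈ J`, `i < j`, which is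
alternating (every vertex is a source or a sink) and non-crossing. -/
def AltNC (w : List Bool) (H : Set (ℕ × ℕ)) : Prop :=
  (∀ p ∈ H, p.1 ∈ Iset w ∧ p.2 ∈ Jset w ∧ p.1 < p.2) ∧
  (∀ v : ℕ, (∀ p ∈ H, p.2 ≠ v) ∨ (∀ p ∈ H, p.1 ≠ v)) ∧
  (∀ p ∈ H, ∀ q ∈ H, p ≠ q → ¬ CrossE p q)

/-- The set `D_ν̄`: maximal alternating non-crossing graphs. -/
def Dnu (w : List Bool) (H : Set (ℕ × ℕ)) : Prop :=
  AltNC w H ∧ ∀ H', AltNC w H' → H ⊆ H' → H' = H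

/-- A maximal arc: `(1,n)`, or an arc `(i,j)` with `j < i` and no index strictly
between `j` and `i`. -/
def MaxArc (w : List Bool) (p : ℕ × ℕ) : Prop :=
  (p.1 = 1 ∧ p.2 = nIdx w) ∨
  (p.2 < p.1 ∧ ∀ k ∈ Iset w ∪ Jset w, ¬ (p.2 < k ∧ k < p.1))

/-! ### Cyclic peaks and rotations -/

/-- The positions `r` of the (non-wrap-around) cyclic peaks: `N` at `r` and `E` at `r+1`. -/
def peakPositions (w : List Bool) : List ℕ :=
  (List.range w.length).filter fun r => !letterAt w r && letterAt w (r + 1)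

/-- The position of the `E` step of the `l`-th cyclic peak (`1 ≤ l ≤ w`); the `w`-th
cyclic peak is the wrap-around peak, whose `E` step is at position `0`. -/
def shiftPos (w : List Bool) (l : ℕ) : ℕ :=
  if l = numVal w then 0 else (peakPositions w).getD (l - 1) 0 + 1

/-- The word `ν̄(l)` obtained by cyclically shifting `w = ν̄` to start at the `E` step of
the `l`-th cyclic peak. -/
def rotWord (w : List Bool) (l : ℕ) : List Bool :=
  w.drop (shiftPos w l) ++ w.take (shiftPos w l)

/-- The effect of the rotation on positions. -/
def rotPos (w : List Bool) (l : ℕ) (p : ℕ) : ℕ :=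
  (p + w.length - shiftPos w l) % w.length

/-- The position of the `E` step with index `i`. -/
def Epos (w : List Bool) (i : ℕ) : ℕ :=
  (((List.range w.length).filter fun p => letterAt w p && decide (idxAt w p = i))).headD 0

/-- The position of the `N` step with index `j`. -/
def Npos (w : List Bool) (j : ℕ) : ℕ :=
  (((List.range w.length).filter fun p => !letterAt w p && decide (idxAt w p = j))).headD 0

/-- The map induced on arcs by the cyclic rotation taking `ν̄` to `ν̄(l)`. -/
def arcMap (w : List Bool) (l : ℕ) (p : ℕ × ℕ) : ℕ × ℕ :=
  (idxAt (rotWord w l) (rotPos w l (Epos w p.1)),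
   idxAt (rotWord w l) (rotPos w l (Npos w p.2)))

/-- The arc determined by the `l`-th cyclic peak. -/
def peakArc (w : List Bool) (l : ℕ) : ℕ × ℕ :=
  if l = numVal w then (1, nIdx w)
  else (idxAt w ((peakPositions w).getD (l - 1) 0 + 1), idxAt w ((peakPositions w).getD (l - 1) 0))

end FP

/-!
For `k < w`, every route defining `Q_k` avoids `e_k = (v_k, v_{k+1})` forward and uses it
backward as soon as it goes backward anywhere. As `e_k` is the only edge of `G̃_B(ν)` joining
`v_k` and `v_{k+1}`, the coordinate `x_{e_k}` of such a route is `≤ 0` and is its smallest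
coordinate. Both properties pass to the convex hull `Q_k`, while `Q_w` consists of nonnegative
flows: this gives the two half-space statements.

If a point of the relative interior of a set contained in a closed half-space lies on the
boundary hyperplane, the whole set lies in the hyperplane. So the relative interiors are
disjoint as soon as `Q_k` leaves the hyperplane, and it does: the route `s → v_{k+1} → v_k → t`,
crossing `e_k` backward, lies in `Q_k` and has `x_{e_k} = -1` and `x_{e_i} = 0` for `i ≠ k`.
-/

section IntrinsicInterior

open Filter Topology

variable {E : Type*} [AddCommGroup E] [Module ℝ E] [TopologicalSpace E] [ContinuousAdd E]
  [ContinuousSMul ℝ E] {s t : Set E}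

/-- Moving from a relative-interior point `x` slightly away from `y` stays in `s`, and there
`f` equals `-r f(y)`. -/
theorem LinearMap.eq_zero_of_nonpos_of_mem_intrinsicInterior (f : E →ₗ[ℝ] ℝ)
    (hf : ∀ y ∈ s, f y ≤ 0) {x : E} (hx : x ∈ intrinsicInterior ℝ s) (hx0 : f x = 0)
    {y : E} (hy : y ∈ s) : f y = 0 := by
  obtain ⟨x', hx', rfl⟩ := mem_intrinsicInterior.mp hx
  let γ : ℝ → affineSpan ℝ s := fun r => ⟨r • ((x' : E) - y) + x', by
    simpa [vsub_eq_sub, vadd_eq_add] using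
      AffineSubspace.smul_vsub_vadd_mem _ r x'.2 (subset_affineSpan ℝ s hy) x'.2⟩
  have hγ : Continuous γ := by fun_prop
  have hγ0 : γ 0 = x' := Subtype.ext (by simp [γ])
  have hnear : ∀ᶠ r in 𝓝[>] (0 : ℝ), γ r ∈ interior (Subtype.val ⁻¹' s) :=
    ((hγ.tendsto 0).eventually (isOpen_interior.mem_nhds (hγ0 ▸ hx'))).filter_mono
      nhdsWithin_le_nhds
  obtain ⟨r, hrs, hr⟩ := (hnear.and self_mem_nhdsWithin).exists
  have hfr := hf _ (interior_subset (s := Subtype.val ⁻¹' s) hrs)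
  simp only [γ, map_add, map_smul, map_sub, hx0, smul_eq_mul] at hfr
  have : 0 ≤ f y := by nlinarith
  exact le_antisymm (hf y hy) this

theorem LinearMap.disjoint_intrinsicInterior_of_nonpos_of_nonneg (f : E →ₗ[ℝ] ℝ)
    (hs : ∀ y ∈ s, f y ≤ 0) (ht : ∀ y ∈ t, 0 ≤ f y) {y : E} (hy : y ∈ s) (hfy : f y ≠ 0) :
    Disjoint (intrinsicInterior ℝ s) t :=
  Set.disjoint_left.mpr fun x hxs hxt => hfy <| f.eq_zero_of_nonpos_of_mem_intrinsicInterior hs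
    hxs (le_antisymm (hs x (intrinsicInterior_subset hxs)) (ht x hxt)) hy

end IntrinsicInterior

namespace FP

namespace LGraph

variable {G : LGraph}

theorem exists_edge_of_mem {a b : ℕ} {τ : EdgeType} (h : (a, b, τ) ∈ G.edges) :
    ∃ e : Fin G.m, G.tail e = a ∧ G.head e = b ∧ G.etype e = τ := by
  obtain ⟨i, hi, he⟩ := List.mem_iff_getElem.mp h
  exact ⟨⟨i, hi⟩, congrArg (·.1) he, congrArg (·.2.1) he, congrArg (·.2.2) he⟩

theorem eq_of_tail_eq_of_head_eq (hG : (G.edges.map fun e => (e.1, e.2.1)).Nodup)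
    {e e' : Fin G.m} (ht : G.tail e = G.tail e') (hh : G.head e = G.head e') : e = e' := by
  have hlen : ∀ e : Fin G.m, (e : ℕ) < (G.edges.map fun e => (e.1, e.2.1)).length :=
    fun e => by simpa [m] using e.2
  refine Fin.ext <| hG.getElem_inj_iff.mp (?_ : _[(e : ℕ)]'(hlen e) = _[(e' : ℕ)]'(hlen e'))
  rw [List.getElem_map, List.getElem_map]
  exact Prod.ext ht hh

theorem exists_route_steps_eq {a b : ℕ} {es em et : Fin G.m}
    (hes : G.tail es = G.src) (hes' : G.head es = b) (hes_ty : G.etype es ≠ .backward)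
    (hem : G.tail em = a) (hem' : G.head em = b) (hem_ty : G.etype em ≠ .forward)
    (het : G.tail et = a) (het' : G.head et = G.snk) (het_ty : G.etype et ≠ .backward)
    (hsrc : G.src ≠ a) (hsnk : b ≠ G.snk) :
    ∃ R : G.Route, R.steps = [(es, true), (em, false), (et, true)] := by
  have hse : es ≠ em := fun h => hsrc (by rw [← hes, ← hem, h])
  have hst : es ≠ et := fun h => hsrc (by rw [← hes, ← het, h])
  have hmt : em ≠ et := fun h => hsnk (by rw [← hem', ← het', h])
  refine ⟨⟨[(es, true), (em, false), (et, true)], by simp, ?_, ?_, ?_, ?_, ?_⟩, rfl⟩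
  · refine List.isChain_cons_cons.mpr ⟨?_, List.isChain_cons_cons.mpr ⟨?_, .singleton _⟩⟩
    · simp [sv, ev, hes', hem']
    · simp [sv, ev, hem, het]
  · simpa [sv] using hes
  · simpa [ev] using het'
  · simp [hes_ty, hem_ty, het_ty]
  · simp [hse, hst, hmt]

namespace Route

variable (R : G.Route) {e : Fin G.m}

theorem neg_one_le_vec : -1 ≤ R.vec e := by
  unfold vec; split_ifs <;> norm_num

theorem vec_nonpos (h : (e, true) ∉ R.steps) : R.vec e ≤ 0 := by
  unfold vec; split_ifs <;> norm_num

theorem vec_nonneg (h : (e, false) ∉ R.steps) : 0 ≤ R.vec e := by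
  unfold vec; split_ifs <;> norm_num

theorem vec_eq_neg_one (h : (e, true) ∉ R.steps) (h' : (e, false) ∈ R.steps) :
    R.vec e = -1 := by
  simp [vec, h, h']

theorem vec_eq_zero (h : (e, true) ∉ R.steps) (h' : (e, false) ∉ R.steps) : R.vec e = 0 := by
  simp [vec, h, h']

end Route

end LGraph

section CanonicalIndex

variable {w : List Bool} {p q m : ℕ}

theorem canonIdxAux_cons (c : Bool) (rest : List Bool) (prev : Bool) (k : ℕ) :
    canonIdxAux (c :: rest) prev k =
      (if prev && !c then k else k + 1) ::
        canonIdxAux rest c (if prev && !c then k else k + 1) := by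
  by_cases h : prev && !c <;> simp [canonIdxAux, h]

theorem canonIdxAux_getD_succ (l : List Bool) (prev : Bool) (k p : ℕ) (h : p + 1 < l.length) :
    (canonIdxAux l prev k).getD (p + 1) 0 =
      if l.getD p false && !l.getD (p + 1) false then (canonIdxAux l prev k).getD p 0
      else (canonIdxAux l prev k).getD p 0 + 1 := by
  induction l generalizing prev k p with
  | nil => simp at h
  | cons c rest ih =>
    rw [canonIdxAux_cons]
    cases p with
    | zero =>
      obtain ⟨c', rest', rfl⟩ := List.exists_cons_of_length_pos (by simpa using h)
      rw [canonIdxAux_cons]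
      cases c <;> cases c' <;> simp
    | succ p => simpa using ih c _ p (by simpa using h)

theorem idxAt_succ (h : p + 1 < w.length) :
    idxAt w (p + 1) =
      if letterAt w p && !letterAt w (p + 1) then idxAt w p else idxAt w p + 1 :=
  canonIdxAux_getD_succ w false 0 p h

theorem idxAt_succ_eq_iff (h : p + 1 < w.length) :
    idxAt w (p + 1) = idxAt w p ↔ letterAt w p = true ∧ letterAt w (p + 1) = false := by
  rw [idxAt_succ h]
  cases letterAt w p <;> cases letterAt w (p + 1) <;> simp

theorem idxAt_mono (hpq : p ≤ q) (hq : q < w.length) : idxAt w p ≤ idxAt w q := by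
  induction q, hpq using Nat.le_induction with
  | base => rfl
  | succ q _ ih =>
    refine (ih (by omega)).trans ?_
    rw [idxAt_succ hq]
    split <;> omega

theorem one_le_idxAt (hp : p < w.length) : 1 ≤ idxAt w p := by
  obtain ⟨c, rest, rfl⟩ := List.exists_cons_of_length_pos (by omega : 0 < w.length)
  have h0 : idxAt (c :: rest) 0 = 1 := by simp [idxAt, canonIdx, canonIdxAux_cons]
  exact h0 ▸ idxAt_mono (Nat.zero_le p) hp

theorem idxAt_le_nIdx (hp : p < w.length) : idxAt w p ≤ nIdx w :=
  idxAt_mono (by omega) (by omega)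

theorem mem_Iset : m ∈ Iset w ↔ ∃ p < w.length, letterAt w p = true ∧ idxAt w p = m := by
  simp [Iset, and_assoc]

theorem mem_Jset : m ∈ Jset w ↔ ∃ p < w.length, letterAt w p = false ∧ idxAt w p = m := by
  simp [Jset, and_assoc]

theorem idxAt_mem_Vset (h : p + 1 < w.length) (hE : letterAt w p = true)
    (hN : letterAt w (p + 1) = false) : idxAt w p ∈ Vset w :=
  Finset.mem_inter.mpr ⟨mem_Iset.mpr ⟨p, by omega, hE, rfl⟩,
    mem_Jset.mpr ⟨p + 1, h, hN, (idxAt_succ_eq_iff h).mpr ⟨hE, hN⟩⟩⟩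

/-- An index carried by both an `E` and an `N` step is the index of a valley: indices only
stall at valleys, so the `E` comes first and is immediately followed by an `N`. -/
theorem exists_valley_of_mem_Vset (hm : m ∈ Vset w) :
    ∃ p, p + 1 < w.length ∧ letterAt w p = true ∧ letterAt w (p + 1) = false ∧ idxAt w p = m := by
  obtain ⟨p, hp, hpE, rfl⟩ := mem_Iset.mp (Finset.mem_inter.mp hm).1
  obtain ⟨q, hq, hqN, hqidx⟩ := mem_Jset.mp (Finset.mem_inter.mp hm).2
  have hvalley : ∀ a b, a < b → b < w.length → idxAt w a = idxAt w b →
      letterAt w a = true ∧ letterAt w (a + 1) = false := fun a b hab hb hidx =>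
    (idxAt_succ_eq_iff (by omega)).mp <|
      le_antisymm (hidx ▸ idxAt_mono hab hb) (idxAt_mono (Nat.le_succ a) (by omega))
  rcases lt_trichotomy p q with hpq | rfl | hqp
  · obtain ⟨hE, hN⟩ := hvalley p q hpq hq hqidx.symm
    exact ⟨p, by omega, hE, hN, rfl⟩
  · simp [hpE] at hqN
  · simp [(hvalley q p hqp hp hqidx).1] at hqN

end CanonicalIndex

section Valleys

variable {w : List Bool} {k k' m : ℕ}

theorem vv_eq_getElem (h1 : 1 ≤ k) (hk : k ≤ numVal w) :
    vv w k = (valleyList w)[k - 1]'(by unfold numVal at hk; omega) :=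
  List.getD_eq_getElem _ _ _

theorem vv_mem_Vset (h1 : 1 ≤ k) (hk : k ≤ numVal w) : vv w k ∈ Vset w := by
  rw [vv_eq_getElem h1 hk]
  exact (Finset.mem_sort _).mp (List.getElem_mem _)

theorem vv_lt_vv (h1 : 1 ≤ k) (hkk' : k < k') (hk' : k' ≤ numVal w) : vv w k < vv w k' := by
  rw [vv_eq_getElem h1 (by omega), vv_eq_getElem (by omega) hk']
  exact (Finset.sortedLT_sort (Vset w)).strictMono_get (show (⟨k - 1, _⟩ : Fin _) < ⟨k' - 1, _⟩
    from Fin.mk_lt_mk.mpr (by omega))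

theorem exists_vv_eq (hm : m ∈ Vset w) : ∃ k, 1 ≤ k ∧ k ≤ numVal w ∧ vv w k = m := by
  obtain ⟨t, ht, hteq⟩ := List.getElem_of_mem ((Finset.mem_sort _).mpr hm : m ∈ valleyList w)
  refine ⟨t + 1, by omega, ht, ?_⟩
  rw [vv_eq_getElem (by omega) ht]
  exact hteq

theorem eq_vv_or_eq_vv_succ_of_mem_Vset (h1 : 1 ≤ k) (hk : k < numVal w) (hm : m ∈ Vset w)
    (hlo : vv w k ≤ m) (hhi : m ≤ vv w (k + 1)) : m = vv w k ∨ m = vv w (k + 1) := by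
  obtain ⟨t, ht1, htw, rfl⟩ := exists_vv_eq hm
  rcases lt_trichotomy t k with htk | rfl | hkt
  · exact absurd hlo (not_le.mpr (vv_lt_vv ht1 htk hk.le))
  · exact Or.inl rfl
  · rcases (Nat.succ_le_of_lt hkt).eq_or_lt with rfl | hkt'
    · exact Or.inr rfl
    · exact absurd hhi (not_le.mpr (vv_lt_vv (by omega) hkt' htw))

theorem one_le_and_le_nIdx_of_mem_Vset (hm : m ∈ Vset w) : 1 ≤ m ∧ m ≤ nIdx w := by
  obtain ⟨p, hp, -, rfl⟩ := mem_Iset.mp (Finset.mem_inter.mp hm).1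
  exact ⟨one_le_idxAt hp, idxAt_le_nIdx hp⟩

theorem one_le_vv_and_vv_le_nIdx (h1 : 1 ≤ k) (hk : k ≤ numVal w) :
    1 ≤ vv w k ∧ vv w k ≤ nIdx w :=
  one_le_and_le_nIdx_of_mem_Vset (vv_mem_Vset h1 hk)

end Valleys

section NuGraph

variable {w : List Bool} {i j k : ℕ}

theorem mem_nuEdgePairs_iff :
    (i, j) ∈ nuEdgePairs w ↔ i ≤ nIdx w ∧ j ≤ nIdx w ∧ i < j ∧ isNuEdgeB w i j = true := by
  simp [nuEdgePairs, and_assoc]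

theorem one_le_of_isNuEdgeB (h : isNuEdgeB w i j = true) : 1 ≤ i := by
  simp only [isNuEdgeB, List.any_eq_true, List.mem_range, Bool.and_eq_true,
    decide_eq_true_eq] at h
  obtain ⟨p, hp, -, -, ⟨⟨⟨-, rfl⟩, -⟩, -⟩⟩ := h
  exact one_le_idxAt hp

theorem one_le_and_le_nIdx_of_mem_nuEdgePairs (h : (i, j) ∈ nuEdgePairs w) :
    1 ≤ i ∧ j ≤ nIdx w :=
  have h := mem_nuEdgePairs_iff.mp h
  ⟨one_le_of_isNuEdgeB h.2.2.2, h.2.1⟩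

/-- `E_{v_k} ⋯ N_{v_{k+1}}` contains no other valley: a valley index between `v_k` and
`v_{k+1}` is one of the two. -/
theorem vv_pair_mem_nuEdgePairs (h1 : 1 ≤ k) (hk : k < numVal w) :
    (vv w k, vv w (k + 1)) ∈ nuEdgePairs w := by
  have hV := vv_mem_Vset (w := w) h1 hk.le
  have hV' := vv_mem_Vset (w := w) (k := k + 1) (by omega) hk
  have hlt := vv_lt_vv (w := w) h1 (by omega : k < k + 1) hk
  obtain ⟨p, hp, hpE, -, hpidx⟩ := exists_valley_of_mem_Vset hV
  obtain ⟨q, hq, hqE, hqN, hqidx⟩ := exists_valley_of_mem_Vset hV'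
  have hpq : p ≤ q := by
    by_contra! hqp
    have := idxAt_mono (w := w) hqp.le (by omega)
    omega
  refine mem_nuEdgePairs_iff.mpr ⟨(one_le_and_le_nIdx_of_mem_Vset hV).2,
    (one_le_and_le_nIdx_of_mem_Vset hV').2, hlt, ?_⟩
  simp only [isNuEdgeB, List.any_eq_true, List.all_eq_true, List.mem_range, Bool.and_eq_true,
    Bool.or_eq_true, Bool.not_eq_true', decide_eq_true_eq]
  refine ⟨p, by omega, q + 1, hq, ⟨⟨⟨⟨by omega, hpE⟩, hqN⟩, hpidx⟩,
    ((idxAt_succ_eq_iff hq).mpr ⟨hqE, hqN⟩).trans hqidx⟩, fun r hr => ?_⟩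
  by_cases hval : p ≤ r ∧ r + 1 ≤ q + 1 ∧ letterAt w r = true ∧ letterAt w (r + 1) = false
  · obtain ⟨hpr, hrq, hrE, hrN⟩ := hval
    have hlo : vv w k ≤ idxAt w r := hpidx ▸ idxAt_mono hpr hr
    have hhi : idxAt w r ≤ vv w (k + 1) := hqidx ▸ idxAt_mono (by omega) (by omega)
    rcases eq_vv_or_eq_vv_succ_of_mem_Vset h1 hk (idxAt_mem_Vset (by omega) hrE hrN) hlo hhi
      with h | h
    · exact Or.inl (Or.inr h)
    · exact Or.inr h
  · left; left
    simpa [and_assoc] using hval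

theorem vv_bidirectional_mem_GBedges (h1 : 1 ≤ k) (hk : k < numVal w) :
    (vv w k, vv w (k + 1), EdgeType.bidirectional) ∈ GBedges w :=
  List.mem_map.mpr ⟨_, vv_pair_mem_nuEdgePairs h1 hk,
    by simp [vv_mem_Vset h1 hk.le, vv_mem_Vset (w := w) (k := k + 1) (by omega) hk]⟩

end NuGraph

section PartialAugmentation

variable {n : ℕ} {E : List GEdge} {u v : ℕ}

theorem two_le_length_of_mem {α : Type*} {l : List α} {a b : α} (ha : a ∈ l) (hb : b ∈ l)
    (hab : a ≠ b) : 2 ≤ l.length :=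
  (List.subperm_of_subset (by simp [hab]) (by simp [ha, hb]) : List.Subperm [a, b] l).length_le

theorem src_edge_mem_partAug (h1 : 1 ≤ v) (hn : v ≤ n) (hdeg : outDegL (fullAug n E) v ≠ 1) :
    (0, v, EdgeType.forward) ∈ partAug n E := by
  refine List.mem_append_left _ (List.mem_append_right _ (List.mem_filterMap.mpr ⟨v - 1, ?_⟩))
  rw [Nat.sub_add_cancel h1]
  exact ⟨List.mem_range.mpr (by omega), if_neg hdeg⟩

theorem snk_edge_mem_partAug (h1 : 1 ≤ v) (hn : v ≤ n) (hdeg : inDegL (fullAug n E) v ≠ 1) :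
    (v, n + 1, EdgeType.forward) ∈ partAug n E := by
  refine List.mem_append_right _ (List.mem_filterMap.mpr ⟨v - 1, ?_⟩)
  rw [Nat.sub_add_cancel h1]
  exact ⟨List.mem_range.mpr (by omega), if_neg hdeg⟩

theorem outDegL_fullAug_ne_one (he : (u, v, EdgeType.bidirectional) ∈ E) (h1 : 1 ≤ v)
    (hn : v ≤ n) : outDegL (fullAug n E) v ≠ 1 := by
  have hsnk : (v, n + 1, EdgeType.forward) ∈ fullAug n E :=
    List.mem_append_right _ (List.mem_map.mpr ⟨v - 1, List.mem_range.mpr (by omega),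
      by rw [Nat.sub_add_cancel h1]⟩)
  refine ne_of_gt (two_le_length_of_mem (List.mem_filter.mpr ⟨List.mem_append_left _
    (List.mem_append_left _ he), ?_⟩) (List.mem_filter.mpr ⟨hsnk, ?_⟩) ?_) <;> simp

theorem inDegL_fullAug_ne_one (he : (u, v, EdgeType.bidirectional) ∈ E) (h1 : 1 ≤ u)
    (hn : u ≤ n) : inDegL (fullAug n E) u ≠ 1 := by
  have hsrc : (0, u, EdgeType.forward) ∈ fullAug n E :=
    List.mem_append_left _ (List.mem_append_right _ (List.mem_map.mpr ⟨u - 1,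
      List.mem_range.mpr (by omega), by rw [Nat.sub_add_cancel h1]⟩))
  refine ne_of_gt (two_le_length_of_mem (List.mem_filter.mpr ⟨List.mem_append_left _
    (List.mem_append_left _ he), ?_⟩) (List.mem_filter.mpr ⟨hsrc, ?_⟩) ?_) <;> simp

theorem filterMap_ite_none_some {α β : Type*} (l : List α) (c : α → Prop) [DecidablePred c]
    (f : α → β) :
    l.filterMap (fun a => if c a then none else some (f a)) = (l.filter fun a => ¬c a).map f := by
  induction l with
  | nil => rfl
  | cons a l ih => by_cases h : c a <;> simp [h, ih]

theorem nodup_pairs_partAug (hE : (E.map fun e => (e.1, e.2.1)).Nodup)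
    (hb : ∀ e ∈ E, 1 ≤ e.1 ∧ e.2.1 ≤ n) :
    ((partAug n E).map fun e => (e.1, e.2.1)).Nodup := by
  simp only [partAug, filterMap_ite_none_some, List.map_append, List.map_map]
  refine List.nodup_append.mpr ⟨List.nodup_append.mpr ⟨hE, ?_, ?_⟩, ?_, ?_⟩
  · exact (List.nodup_range.filter _).map fun a b h => by simpa using h
  · simp only [List.mem_map, List.mem_filter, List.mem_range, Function.comp_apply]
    rintro _ ⟨e, he, rfl⟩ _ ⟨i, -, rfl⟩ h
    have := hb e he
    simp only [Prod.mk.injEq] at h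
    omega
  · exact (List.nodup_range.filter _).map fun a b h => by simpa using h
  · simp only [List.mem_append, List.mem_map, List.mem_filter, List.mem_range,
      Function.comp_apply]
    rintro _ (⟨e, he, rfl⟩ | ⟨i, -, rfl⟩) _ ⟨j, -, rfl⟩ h <;> simp only [Prod.mk.injEq] at h
    · have := hb e he
      omega
    · omega

end PartialAugmentation

section GBt

variable {w : List Bool} {k : ℕ}

theorem nodup_pairs_GBt : ((GBt w).edges.map fun e => (e.1, e.2.1)).Nodup := by
  refine nodup_pairs_partAug ?_ fun e he => ?_
  · have hpairs : (GBedges w).map (fun e => (e.1, e.2.1)) = nuEdgePairs w := by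
      simp [GBedges, Function.comp_def]
    rw [hpairs]
    exact (List.nodup_range.product List.nodup_range).filter _
  · obtain ⟨p, hp, rfl⟩ := List.mem_map.mp he
    exact one_le_and_le_nIdx_of_mem_nuEdgePairs hp

theorem GBt.eq_of_tail_eq_of_head_eq {e e' : Fin (GBt w).m}
    (ht : (GBt w).tail e = (GBt w).tail e') (hh : (GBt w).head e = (GBt w).head e') : e = e' :=
  LGraph.eq_of_tail_eq_of_head_eq nodup_pairs_GBt ht hh

/-- The augmentation edges `(s, v_{k+1})` and `(v_k, t)` survive the partial augmentation
because `v_{k+1}` can also be left, and `v_k` entered, through the bidirectional edge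
`(v_k, v_{k+1})`. -/
theorem detour_edges_mem_GBt (h1 : 1 ≤ k) (hk : k < numVal w) :
    (0, vv w (k + 1), EdgeType.forward) ∈ (GBt w).edges ∧
    (vv w k, vv w (k + 1), EdgeType.bidirectional) ∈ (GBt w).edges ∧
    (vv w k, nIdx w + 1, EdgeType.forward) ∈ (GBt w).edges := by
  have he := vv_bidirectional_mem_GBedges h1 hk
  have hb := one_le_vv_and_vv_le_nIdx (w := w) h1 hk.le
  have hb' := one_le_vv_and_vv_le_nIdx (w := w) (k := k + 1) (by omega) hk
  exact ⟨src_edge_mem_partAug hb'.1 hb'.2 (outDegL_fullAug_ne_one he hb'.1 hb'.2),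
    List.mem_append_left _ (List.mem_append_left _ he),
    snk_edge_mem_partAug hb.1 hb.2 (inDegL_fullAug_ne_one he hb.1 hb.2)⟩

end GBt

section Qsets

variable {w : List Bool} {k : ℕ}

theorem QRoute.vec_le {R : (GBt w).Route} (hR : QRoute w k R) {e₀ : Fin (GBt w).m}
    (ht : (GBt w).tail e₀ = vv w k) (hh : (GBt w).head e₀ = vv w (k + 1)) :
    R.vec e₀ ≤ 0 ∧ ∀ e, R.vec e₀ ≤ R.vec e := by
  have hfwd := hR.1 e₀ ht hh
  refine ⟨R.vec_nonpos hfwd, fun e => ?_⟩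
  by_cases hbwd : (e₀, false) ∈ R.steps
  · exact (R.vec_eq_neg_one hfwd hbwd).trans_le R.neg_one_le_vec
  · rw [R.vec_eq_zero hfwd hbwd]
    refine R.vec_nonneg fun he => hbwd ?_
    obtain ⟨e', ht', hh', he'⟩ := hR.2 ⟨_, he, rfl⟩
    rwa [GBt.eq_of_tail_eq_of_head_eq (ht'.trans ht.symm) (hh'.trans hh.symm)] at he'

theorem Qset_le (hk : k < numVal w) {e₀ : Fin (GBt w).m} (ht : (GBt w).tail e₀ = vv w k)
    (hh : (GBt w).head e₀ = vv w (k + 1)) {x : Fin (GBt w).m → ℝ} (hx : x ∈ Qset w k) :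
    x e₀ ≤ 0 ∧ ∀ e, x e₀ ≤ x e := by
  rw [Qset, if_neg hk.ne] at hx
  have hroutes : ∀ f : (Fin (GBt w).m → ℝ) →ₗ[ℝ] ℝ,
      (∀ R : (GBt w).Route, QRoute w k R → f R.vec ≤ 0) → f x ≤ 0 := fun f hf =>
    convexHull_min (by rintro _ ⟨R, hR, rfl⟩; exact hf R hR) (convex_halfSpace_le f.isLinear 0) hx
  refine ⟨hroutes (LinearMap.proj e₀) fun R hR => (hR.vec_le ht hh).1, fun e => ?_⟩
  have := hroutes ((LinearMap.proj e₀ : (Fin (GBt w).m → ℝ) →ₗ[ℝ] ℝ) - LinearMap.proj e)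
    fun R hR => by simpa using (hR.vec_le ht hh).2 e
  simpa using this

theorem Qset_numVal_nonneg {x : Fin (GBt w).m → ℝ} (hx : x ∈ Qset w (numVal w))
    (e : Fin (GBt w).m) : 0 ≤ x e := by
  rw [Qset, if_pos rfl] at hx
  exact hx.2 e

theorem exists_mem_Qset_apply_eq_neg_one (h1 : 1 ≤ k) (hk : k < numVal w) :
    ∃ eₖ : Fin (GBt w).m, (GBt w).tail eₖ = vv w k ∧ (GBt w).head eₖ = vv w (k + 1) ∧
      ∃ y ∈ Qset w k, y eₖ = -1 ∧ ∀ e, e ≠ eₖ → (GBt w).tail e ≠ 0 →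
        (GBt w).head e ≠ nIdx w + 1 → y e = 0 := by
  have hb := one_le_vv_and_vv_le_nIdx (w := w) h1 hk.le
  have hb' := one_le_vv_and_vv_le_nIdx (w := w) (k := k + 1) (by omega) hk
  obtain ⟨hs, hm, ht⟩ := detour_edges_mem_GBt h1 hk
  obtain ⟨es, hes, hes', hes_ty⟩ := LGraph.exists_edge_of_mem hs
  obtain ⟨em, hem, hem', hem_ty⟩ := LGraph.exists_edge_of_mem hm
  obtain ⟨et, het, het', het_ty⟩ := LGraph.exists_edge_of_mem ht
  obtain ⟨R, hR⟩ := LGraph.exists_route_steps_eq hes hes' (by simp [hes_ty]) hem hem'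
    (by simp [hem_ty]) het het' (by simp [het_ty]) (show 0 ≠ vv w k by omega)
    (show vv w (k + 1) ≠ nIdx w + 1 by omega)
  have hne_es : ∀ e, (GBt w).tail e ≠ 0 → e ≠ es := fun e h he => h (he ▸ hes)
  have hne_et : ∀ e, (GBt w).head e ≠ nIdx w + 1 → e ≠ et := fun e h he => h (he ▸ het')
  have hQR : QRoute w k R :=
    ⟨fun e ht hh => by simp [hR, hne_es e (by omega), hne_et e (by omega)],
      fun _ => ⟨em, hem, hem', by simp [hR]⟩⟩
  refine ⟨em, hem, hem', R.vec, ?_, R.vec_eq_neg_one ?_ (by simp [hR]),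
    fun e hne htail hhead => R.vec_eq_zero ?_ ?_⟩
  · rw [Qset, if_neg hk.ne]
    exact subset_convexHull ℝ _ ⟨R, hQR, rfl⟩
  · simp [hR, hne_es em (by omega), hne_et em (by omega)]
  all_goals simp [hR, hne_es e htail, hne_et e hhead, hne]

end Qsets

end FP

open FP in
/-- For `1 ≤ i < j ≤ w` the polytopes `Q_i` and `Q_j` have disjoint
relative interiors; more precisely, for `j < w` they lie in the two opposite closed
half-spaces of the hyperplane `x_{(v_i,v_{i+1})} = x_{(v_j,v_{j+1})}`, and `Q_i` and
`Q_w` lie in the two opposite closed half-spaces of `x_{(v_i,v_{i+1})} = 0`. -/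
theorem stmt8 (ν : List Bool) (i j : ℕ) (hi : 1 ≤ i) (hij : i < j)
    (hj : j ≤ numVal (ovl ν)) :
    Disjoint (intrinsicInterior ℝ (Qset (ovl ν) i)) (intrinsicInterior ℝ (Qset (ovl ν) j)) ∧
    (j < numVal (ovl ν) →
      ∀ ei ej : Fin (GBt (ovl ν)).m,
        (GBt (ovl ν)).tail ei = vv (ovl ν) i → (GBt (ovl ν)).head ei = vv (ovl ν) (i + 1) →
        (GBt (ovl ν)).tail ej = vv (ovl ν) j → (GBt (ovl ν)).head ej = vv (ovl ν) (j + 1) →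
        (∀ x ∈ Qset (ovl ν) i, x ei ≤ x ej) ∧ (∀ x ∈ Qset (ovl ν) j, x ej ≤ x ei)) ∧
    (j = numVal (ovl ν) →
      ∀ ei : Fin (GBt (ovl ν)).m,
        (GBt (ovl ν)).tail ei = vv (ovl ν) i → (GBt (ovl ν)).head ei = vv (ovl ν) (i + 1) →
        (∀ x ∈ Qset (ovl ν) i, x ei ≤ 0) ∧ (∀ x ∈ Qset (ovl ν) j, 0 ≤ x ei)) := by
  set w := ovl ν
  have hiw : i < numVal w := hij.trans_le hj
  refine ⟨?_, fun hjw ei ej hit hih hjt hjh => ⟨fun x hx => (Qset_le hiw hit hih hx).2 ej,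
      fun x hx => (Qset_le hjw hjt hjh hx).2 ei⟩,
    fun hjw ei hit hih => ⟨fun x hx => (Qset_le hiw hit hih hx).1,
      fun x hx => Qset_numVal_nonneg (hjw ▸ hx) ei⟩⟩
  rcases hj.lt_or_eq with hjw | rfl
  · obtain ⟨ej, hjt, hjh, y, hy, hyj, hy0⟩ := exists_mem_Qset_apply_eq_neg_one (by omega) hjw
    obtain ⟨ei, hit, hih, -⟩ := LGraph.exists_edge_of_mem (detour_edges_mem_GBt hi hiw).2.1
    have hvv := vv_lt_vv (w := w) hi hij hj
    have hb := one_le_vv_and_vv_le_nIdx (w := w) hi hiw.le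
    have hb' := one_le_vv_and_vv_le_nIdx (w := w) (k := i + 1) (by omega) hiw
    have hyi : y ei = 0 := hy0 ei (fun h => by rw [h] at hit; omega) (by omega) (by omega)
    let f := (LinearMap.proj ej : (Fin (GBt w).m → ℝ) →ₗ[ℝ] ℝ) - LinearMap.proj ei
    have hf : ∀ x, f x = x ej - x ei := fun x => rfl
    refine (Disjoint.symm ?_).mono_left intrinsicInterior_subset
    refine f.disjoint_intrinsicInterior_of_nonpos_of_nonneg (fun x hx => ?_) (fun x hx => ?_) hy ?_
    · simpa [hf] using (Qset_le hjw hjt hjh hx).2 ei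
    · simpa [hf] using (Qset_le hiw hit hih hx).2 ej
    · simp [hf, hyi, hyj]
  · obtain ⟨ei, hit, hih, y, hy, hyi, -⟩ := exists_mem_Qset_apply_eq_neg_one hi hiw
    refine (LinearMap.proj ei).disjoint_intrinsicInterior_of_nonpos_of_nonneg
      (fun x hx => (Qset_le hiw hit hih hx).1) (fun x hx => Qset_numVal_nonneg hx ei) hy ?_
      |>.mono_right intrinsicInterior_subset
    simp [hyi]
end

section
/- Let H be a directed graph on vertex set [n] all of whose edges (a,b) satisfy a < b, and suppose the edges of H are pairwise non-crossing. Let j be a vertex of H having an incoming edge (i,j) and an outgoing edge (j,k) such that H contains no edge (i',j) with i' < i and no edge (j,k') with k < k'. Then the edge (i,k) crosses no edge of H; consequently, each of the three graphs (H ∖ {(i,j)}) ∪ {(i,k)}, (H ∖ {(j,k)}) ∪ {(i,k)}, and (H ∖ {(i,j),(j,k)}) ∪ {(i,k)} has pairwise non-crossing edges. -/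
open FP in
/-- Let `H` be a non-crossing graph on `[n]` with all edges `(a,b)`,
`a < b`, and let `j` have an incoming edge `(i,j)` and an outgoing edge `(j,k)` that are
longest at `j`.  Then `(i,k)` crosses no edge of `H`; consequently each of the three
reduced graphs is non-crossing. -/
theorem stmt13 (n : ℕ) (H : Set (ℕ × ℕ))
    (hwf : ∀ p ∈ H, 1 ≤ p.1 ∧ p.1 < p.2 ∧ p.2 ≤ n)
    (hnc : ∀ p ∈ H, ∀ q ∈ H, ¬ CrossE p q)
    (i j k : ℕ) (hij : (i, j) ∈ H) (hjk : (j, k) ∈ H)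
    (hin : ∀ i', i' < i → (i', j) ∉ H) (hout : ∀ k', k < k' → (j, k') ∉ H) :
    (∀ q ∈ H, ¬ CrossE (i, k) q) ∧
    (∀ p ∈ (H \ {(i, j)}) ∪ {(i, k)}, ∀ q ∈ (H \ {(i, j)}) ∪ {(i, k)}, ¬ CrossE p q) ∧
    (∀ p ∈ (H \ {(j, k)}) ∪ {(i, k)}, ∀ q ∈ (H \ {(j, k)}) ∪ {(i, k)}, ¬ CrossE p q) ∧
    (∀ p ∈ (H \ {(i, j), (j, k)}) ∪ {(i, k)},
      ∀ q ∈ (H \ {(i, j), (j, k)}) ∪ {(i, k)}, ¬ CrossE p q) := by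
  obtain ⟨-, hij2, -⟩ := hwf _ hij
  obtain ⟨-, hjk2, -⟩ := hwf _ hjk
  have key : ∀ q ∈ H, ¬ CrossE (i, k) q := by
    rintro ⟨c, d⟩ hq hcr
    rcases hcr with ⟨h1, h2, h3⟩ | ⟨h1, h2, h3⟩
    · rcases lt_trichotomy c j with hc | hc | hc
      · exact hnc _ hq _ hij (Or.inr ⟨h1, hc, by omega⟩)
      · exact hout d (by omega) (by subst hc; exact hq)
      · exact hnc _ hjk _ hq (Or.inl ⟨hc, by omega, h3⟩)
    · rcases lt_trichotomy d j with hd | hd | hd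
      · exact hnc _ hq _ hij (Or.inl ⟨by omega, h2, hd⟩)
      · exact hin c h1 (by subst hd; exact hq)
      · exact hnc _ hq _ hjk (Or.inl ⟨by omega, hd, h3⟩)
  have hself : ¬ CrossE (i, k) (i, k) := by
    rintro (⟨h1, -, -⟩ | ⟨h1, -, -⟩) <;> exact lt_irrefl _ h1
  have symm : ∀ p q : ℕ × ℕ, CrossE p q → CrossE q p := fun p q h => h.elim Or.inr Or.inl
  refine ⟨key, ?_, ?_, ?_⟩ <;>
  · rintro p (⟨hp, -⟩ | hp) q (⟨hq, -⟩ | hq)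
    · exact hnc _ hp _ hq
    · simp only [Set.mem_singleton_iff] at hq; subst hq
      exact fun h => key _ hp (symm _ _ h)
    · simp only [Set.mem_singleton_iff] at hp; subst hp
      exact key _ hq
    · simp only [Set.mem_singleton_iff] at hp hq; subst hp; subst hq; exact hself
end
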